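/- arXiv:1507.05412 — 2 statements merged into one kernel-verified Lean document; each statement's English description precedes it below -/
import Mathlib

section
/- For a twice continuously differentiable zonal function f on S^{n-1}, the squared norm of the covariant Hessian satisfies |∇²f|² = (n−2)(t ∂f/∂t)² + ((1−t²) ∂²f/∂t² − t ∂f/∂t)². -/
/-!
The degree-zero extension of `x ↦ F ⟪x, e⟫` is `F ∘ ψ` with `ψ x = ‖x‖⁻¹ * ⟪x, e⟫`. At a unit
vector `u`, on tangent vectors `X, Y`, one has `Dψ u X = ⟪X, e⟫` and `D²ψ u (X, Y) = -t ⟪X, Y⟫`,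
so by the second-order chain rule the Hessian is `A ⟪X, e⟫ ⟪Y, e⟫ - B ⟪X, Y⟫` with `A = F''(t)`
and `B = t F'(t)`. With `P` the tangential projection and `bᵢ` the standard basis, its entry at
`(P bᵢ, P bⱼ)` is `⟪bᵢ, (A ⟪P bⱼ, e⟫) • P e - B • P bⱼ⟫`, so Parseval in `i` and then in `j`
turns the sum of squares into `A² ‖P e‖⁴ - 2AB ‖P e‖² + (n - 1) B²`, where `‖P e‖² = 1 - t²`.
-/

open scoped RealInnerProductSpace
open MeasureTheory

noncomputable section

abbrev Eucl (n : ℕ) := EuclideanSpace ℝ (Fin n)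

/-- The degree-zero homogeneous extension of a function on the unit sphere. -/
def sphereExt {n : ℕ} (f : Eucl n → ℝ) : Eucl n → ℝ := fun x => f (‖x‖⁻¹ • x)

/-- Squared norm of the Riemannian gradient on the unit sphere, computed via the
Euclidean gradient of the degree-zero homogeneous extension (which is tangential). -/
def sGradNormSq (n : ℕ) (f : Eucl n → ℝ) (u : Eucl n) : ℝ := ‖gradient (sphereExt f) u‖ ^ 2

/-- Orthogonal projection of \`v\` onto the tangent space of the unit sphere at \`u\`. -/
def tanProj {n : ℕ} (u v : Eucl n) : Eucl n := v - ⟪v, u⟫ • u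

/-- Squared tensor norm of the covariant Hessian on the unit sphere: for the round sphere
the covariant Hessian of \`f\` at tangent vectors \`X, Y\` equals the Euclidean second
derivative of the degree-zero homogeneous extension evaluated at \`X, Y\`. -/
def sHessNormSq (n : ℕ) (f : Eucl n → ℝ) (u : Eucl n) : ℝ :=
  ∑ i : Fin n, ∑ j : Fin n,
    (iteratedFDeriv ℝ 2 (sphereExt f) u
      ![tanProj u (EuclideanSpace.single i 1), tanProj u (EuclideanSpace.single j 1)]) ^ 2

open Topology

section ChainRule

variable {𝕜 E : Type*} [NontriviallyNormedField 𝕜] [NormedAddCommGroup E] [NormedSpace 𝕜 E]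

theorem iteratedFDeriv_two_comp_apply {F : 𝕜 → 𝕜} {φ : E → 𝕜} {x : E}
    (hF : ContDiffAt 𝕜 2 F (φ x)) (hφ : ContDiffAt 𝕜 2 φ x) (X Y : E) :
    iteratedFDeriv 𝕜 2 (F ∘ φ) x ![X, Y]
      = deriv (deriv F) (φ x) * (fderiv 𝕜 φ x X * fderiv 𝕜 φ x Y)
        + deriv F (φ x) * iteratedFDeriv 𝕜 2 φ x ![X, Y] := by
  have hφ_near : ∀ᶠ y in 𝓝 x, DifferentiableAt 𝕜 φ y :=
    (hφ.eventually (by simp)).mono fun y hy => hy.differentiableAt (by norm_num)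
  have hF_near : ∀ᶠ y in 𝓝 x, DifferentiableAt 𝕜 F (φ y) :=
    hφ.continuousAt.eventually ((hF.eventually (by simp)).mono fun z hz =>
      hz.differentiableAt (by norm_num))
  have hfderiv : fderiv 𝕜 (F ∘ φ) =ᶠ[𝓝 x] fun y => deriv F (φ y) • fderiv 𝕜 φ y := by
    filter_upwards [hφ_near, hF_near] with y hφy hFy
    rw [fderiv_comp y hFy hφy]
    ext v
    simp [mul_comm]
  have hF' : HasDerivAt (deriv F) (deriv (deriv F) (φ x)) (φ x) :=
    (((hF.fderiv_right (m := 1) le_rfl).differentiableAt one_ne_zero).clm_apply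
      (differentiableAt_const 1)).hasDerivAt
  have hφ' : HasFDerivAt (fderiv 𝕜 φ) (fderiv 𝕜 (fderiv 𝕜 φ) x) x :=
    ((hφ.fderiv_right (m := 1) le_rfl).differentiableAt one_ne_zero).hasFDerivAt
  have hD : HasFDerivAt (fun y => deriv F (φ y) • fderiv 𝕜 φ y) _ x :=
    (hF'.comp_hasFDerivAt x (hφ.differentiableAt two_ne_zero).hasFDerivAt).fun_smul hφ'
  rw [iteratedFDeriv_two_apply, iteratedFDeriv_two_apply, hfderiv.fderiv_eq, hD.fderiv]
  simp only [Function.comp_apply, Matrix.cons_val_zero, Matrix.cons_val_one,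
    Matrix.cons_val_fin_one, add_apply, smul_apply,
    ContinuousLinearMap.smulRight_apply, smul_eq_mul]
  ring

end ChainRule

section RadialCosine

variable {E : Type*} [NormedAddCommGroup E] [InnerProductSpace ℝ E] {x : E}

theorem hasFDerivAt_norm (hx : x ≠ 0) :
    HasFDerivAt (fun y : E => ‖y‖) (‖x‖⁻¹ • innerSL ℝ x) x := by
  have h : HasFDerivAt (fun y : E => √(‖y‖ ^ 2))
      ((1 / (2 * √(‖x‖ ^ 2))) • (2 : ℕ) • innerSL ℝ x) x :=
    (Real.hasDerivAt_sqrt (pow_ne_zero 2 (norm_ne_zero_iff.2 hx))).comp_hasFDerivAt x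
      (hasStrictFDerivAt_norm_sq x).hasFDerivAt
  simp only [Real.sqrt_sq (norm_nonneg _)] at h
  refine h.congr_fderiv ?_
  module

theorem hasFDerivAt_inv_norm (hx : x ≠ 0) :
    HasFDerivAt (fun y : E => ‖y‖⁻¹) (-(‖x‖⁻¹ ^ 3) • innerSL ℝ x) x := by
  have h : HasFDerivAt (fun y : E => ‖y‖⁻¹) (-(‖x‖ ^ 2)⁻¹ • ‖x‖⁻¹ • innerSL ℝ x) x :=
    (hasDerivAt_inv (norm_ne_zero_iff.2 hx)).comp_hasFDerivAt x (hasFDerivAt_norm hx)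
  refine h.congr_fderiv ?_
  module

theorem hasFDerivAt_inner_left (e x : E) :
    HasFDerivAt (fun y : E => ⟪y, e⟫) (innerSL ℝ e) x := by
  convert (innerSL ℝ e).hasFDerivAt using 1
  ext y
  exact real_inner_comm _ _

theorem contDiffAt_inv_norm_mul_inner (e : E) (hx : x ≠ 0) {k : WithTop ℕ∞} :
    ContDiffAt ℝ k (fun y : E => ‖y‖⁻¹ * ⟪y, e⟫) x :=
  ((contDiffAt_norm ℝ hx).inv (norm_ne_zero_iff.2 hx)).mul
    (contDiffAt_id.inner ℝ contDiffAt_const)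

theorem hasFDerivAt_inv_norm_mul_inner (e : E) (hx : x ≠ 0) :
    HasFDerivAt (fun y : E => ‖y‖⁻¹ * ⟪y, e⟫)
      (‖x‖⁻¹ • innerSL ℝ e - (‖x‖⁻¹ ^ 3 * ⟪x, e⟫) • innerSL ℝ x) x := by
  have h : HasFDerivAt (fun y : E => ‖y‖⁻¹ * ⟪y, e⟫) _ x :=
    (hasFDerivAt_inv_norm hx).fun_mul (hasFDerivAt_inner_left e x)
  refine h.congr_fderiv ?_
  module

variable {u X Y : E}

theorem fderiv_inv_norm_mul_inner_apply (e : E) (hu : ‖u‖ = 1) (hX : ⟪u, X⟫ = 0) :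
    fderiv ℝ (fun y : E => ‖y‖⁻¹ * ⟪y, e⟫) u X = ⟪X, e⟫ := by
  rw [(hasFDerivAt_inv_norm_mul_inner e (norm_ne_zero_iff.1 (hu ▸ one_ne_zero))).fderiv]
  simp [hu, hX, real_inner_comm e X]

theorem iteratedFDeriv_two_inv_norm_mul_inner_apply (e : E) (hu : ‖u‖ = 1) (hX : ⟪u, X⟫ = 0)
    (hY : ⟪u, Y⟫ = 0) :
    iteratedFDeriv ℝ 2 (fun y : E => ‖y‖⁻¹ * ⟪y, e⟫) u ![X, Y] = -(⟪u, e⟫ * ⟪X, Y⟫) := by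
  have hu0 : u ≠ 0 := norm_ne_zero_iff.1 (hu ▸ one_ne_zero)
  have hfderiv : fderiv ℝ (fun y : E => ‖y‖⁻¹ * ⟪y, e⟫) =ᶠ[𝓝 u]
      fun y => ‖y‖⁻¹ • innerSL ℝ e - (‖y‖⁻¹ ^ 3 * ⟪y, e⟫) • innerSL ℝ y := by
    filter_upwards [eventually_ne_nhds hu0] with y hy
    exact (hasFDerivAt_inv_norm_mul_inner e hy).fderiv
  have hD : HasFDerivAt
      (fun y => ‖y‖⁻¹ • innerSL ℝ e - (‖y‖⁻¹ ^ 3 * ⟪y, e⟫) • innerSL ℝ y) _ u :=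
    ((hasFDerivAt_inv_norm hu0).fun_smul (hasFDerivAt_const _ _)).sub
      ((((hasFDerivAt_inv_norm hu0).pow 3).fun_mul (hasFDerivAt_inner_left e u)).fun_smul
        (innerSL ℝ).hasFDerivAt)
  rw [iteratedFDeriv_two_apply, hfderiv.fderiv_eq, hD.fderiv]
  simp [hu, hX, hY, innerSL_apply_apply (𝕜 := ℝ)]

end RadialCosine

section TanProj

variable {n : ℕ}

theorem inner_tanProj_left (u v w : Eucl n) :
    ⟪tanProj u v, w⟫ = ⟪v, w⟫ - ⟪v, u⟫ * ⟪u, w⟫ := by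
  simp only [tanProj, inner_sub_left, real_inner_smul_left]

theorem inner_tanProj_comm (u v w : Eucl n) : ⟪tanProj u v, w⟫ = ⟪v, tanProj u w⟫ := by
  rw [real_inner_comm (tanProj u w), inner_tanProj_left, inner_tanProj_left, real_inner_comm v w,
    real_inner_comm u v, real_inner_comm u w]
  ring

theorem inner_tanProj_right_self {u : Eucl n} (hu : ‖u‖ = 1) (v : Eucl n) :
    ⟪u, tanProj u v⟫ = 0 := by
  rw [← inner_tanProj_comm, inner_tanProj_left, real_inner_self_eq_norm_sq, hu]
  ring

theorem inner_tanProj_tanProj {u : Eucl n} (hu : ‖u‖ = 1) (v w : Eucl n) :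
    ⟪tanProj u v, tanProj u w⟫ = ⟪v, tanProj u w⟫ := by
  rw [inner_tanProj_left, inner_tanProj_right_self hu]
  ring

theorem norm_tanProj_sq {u : Eucl n} (hu : ‖u‖ = 1) (v : Eucl n) :
    ‖tanProj u v‖ ^ 2 = ‖v‖ ^ 2 - ⟪v, u⟫ ^ 2 := by
  rw [← real_inner_self_eq_norm_sq, inner_tanProj_tanProj hu, ← inner_tanProj_comm,
    inner_tanProj_left, real_inner_self_eq_norm_sq, real_inner_comm u v]
  ring

theorem sum_sq_tanProj_single {u e : Eucl n} (hu : ‖u‖ = 1) (he : ‖e‖ = 1) (A B : ℝ) :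
    ∑ i : Fin n, ∑ j : Fin n,
      (A * (⟪tanProj u (EuclideanSpace.single i 1), e⟫
          * ⟪tanProj u (EuclideanSpace.single j 1), e⟫)
        - B * ⟪tanProj u (EuclideanSpace.single i 1), tanProj u (EuclideanSpace.single j 1)⟫) ^ 2
      = ((n : ℝ) - 2) * B ^ 2 + (A * (1 - ⟪u, e⟫ ^ 2) - B) ^ 2 := by
  let b := EuclideanSpace.basisFun (Fin n) ℝ
  let w : Fin n → Eucl n := fun j =>
    (A * ⟪tanProj u (b j), e⟫) • tanProj u e - B • tanProj u (b j)
  have hb : ∀ i, EuclideanSpace.single i (1 : ℝ) = b i := fun i => by simp [b]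
  have hentry : ∀ i j, A * (⟪tanProj u (b i), e⟫ * ⟪tanProj u (b j), e⟫)
      - B * ⟪tanProj u (b i), tanProj u (b j)⟫ = ⟪b i, w j⟫ := by
    intro i j
    rw [inner_sub_right, real_inner_smul_right, real_inner_smul_right,
      ← inner_tanProj_comm u (b i) e, ← inner_tanProj_tanProj hu (b i) (b j)]
    ring
  have hnorm : ∀ j, ‖w j‖ ^ 2
      = (A ^ 2 * (1 - ⟪u, e⟫ ^ 2) - 2 * A * B) * ⟪b j, tanProj u e⟫ ^ 2
        + B ^ 2 * (1 - ⟪b j, u⟫ ^ 2) := by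
    intro j
    rw [norm_sub_sq_real, norm_smul, norm_smul, mul_pow, mul_pow, Real.norm_eq_abs,
      Real.norm_eq_abs, sq_abs, sq_abs, norm_tanProj_sq hu, norm_tanProj_sq hu,
      real_inner_smul_left, real_inner_smul_right, inner_tanProj_tanProj hu,
      ← inner_tanProj_comm, he, b.orthonormal.1 j, real_inner_comm u e, inner_tanProj_comm,
      real_inner_comm (b j) (tanProj u e)]
    ring
  calc _ = ∑ j, ∑ i, ⟪b i, w j⟫ ^ 2 := by
        rw [Finset.sum_comm]
        simp only [hb, hentry]
    _ = ∑ j, ((A ^ 2 * (1 - ⟪u, e⟫ ^ 2) - 2 * A * B) * ⟪b j, tanProj u e⟫ ^ 2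
          + B ^ 2 * (1 - ⟪b j, u⟫ ^ 2)) := by
        simp only [b.sum_sq_inner_right, hnorm]
    _ = (A ^ 2 * (1 - ⟪u, e⟫ ^ 2) - 2 * A * B) * (1 - ⟪u, e⟫ ^ 2) + B ^ 2 * (n - 1) := by
        rw [Finset.sum_add_distrib, ← Finset.mul_sum, ← Finset.mul_sum, Finset.sum_sub_distrib,
          b.sum_sq_inner_right, b.sum_sq_inner_right, norm_tanProj_sq hu, he, hu,
          real_inner_comm u e]
        simp
    _ = _ := by ring

end TanProj

theorem iteratedFDeriv_two_sphereExt_zonal_apply {n : ℕ} {F : ℝ → ℝ} {e u X Y : Eucl n}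
    (hF : ContDiffAt ℝ 2 F ⟪u, e⟫) (hu : ‖u‖ = 1) (hX : ⟪u, X⟫ = 0) (hY : ⟪u, Y⟫ = 0) :
    iteratedFDeriv ℝ 2 (sphereExt fun x => F ⟪x, e⟫) u ![X, Y]
      = deriv (deriv F) ⟪u, e⟫ * (⟪X, e⟫ * ⟪Y, e⟫) - ⟪u, e⟫ * deriv F ⟪u, e⟫ * ⟪X, Y⟫ := by
  have hext : sphereExt (fun x => F ⟪x, e⟫) = F ∘ fun y => ‖y‖⁻¹ * ⟪y, e⟫ :=
    funext fun y => congrArg F (real_inner_smul_left _ _ _)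
  have hψu : ‖u‖⁻¹ * ⟪u, e⟫ = ⟪u, e⟫ := by rw [hu, inv_one, one_mul]
  rw [← hψu] at hF
  rw [hext, iteratedFDeriv_two_comp_apply (φ := fun y => ‖y‖⁻¹ * ⟪y, e⟫) hF
      (contDiffAt_inv_norm_mul_inner e (norm_ne_zero_iff.1 (hu ▸ one_ne_zero))),
    fderiv_inv_norm_mul_inner_apply e hu hX, fderiv_inv_norm_mul_inner_apply e hu hY,
    iteratedFDeriv_two_inv_norm_mul_inner_apply e hu hX hY, hψu]
  ring

theorem zonal_hess_norm_sq_general (n : ℕ) (e : Eucl n) (he : ‖e‖ = 1)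
    (F : ℝ → ℝ) (hF : ContDiff ℝ 2 F)
    (u : Eucl n) (hu : ‖u‖ = 1) (t : ℝ) (ht : t = ⟪u, e⟫) :
    sHessNormSq n (fun x => F ⟪x, e⟫) u
      = ((n : ℝ) - 2) * (t * deriv F t) ^ 2
        + ((1 - t ^ 2) * deriv (deriv F) t - t * deriv F t) ^ 2 := by
  subst ht
  rw [sHessNormSq, mul_comm (1 - _), ← sum_sq_tanProj_single hu he]
  refine Finset.sum_congr rfl fun i _ => Finset.sum_congr rfl fun j _ => ?_
  rw [iteratedFDeriv_two_sphereExt_zonal_apply hF.contDiffAt hu (inner_tanProj_right_self hu _)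
    (inner_tanProj_right_self hu _)]

/-- for a C² zonal function `f(u) = F(⟪u,ē⟫)` on `S^{n-1}`,
`|∇²f|² = (n-2)(t F'(t))² + ((1-t²) F''(t) - t F'(t))²` at points with
`t = ⟪u,ē⟫ ∈ (-1,1)`. -/
theorem zonal_hess_norm_sq (n : ℕ) (hn : 2 ≤ n) (e : Eucl n) (he : ‖e‖ = 1)
    (F : ℝ → ℝ) (hF : ContDiff ℝ 2 F)
    (u : Eucl n) (hu : ‖u‖ = 1) (t : ℝ) (ht : t = ⟪u, e⟫) (ht' : t ∈ Set.Ioo (-1 : ℝ) 1) :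
    sHessNormSq n (fun x => F ⟪x, e⟫) u
      = ((n : ℝ) - 2) * (t * deriv F t) ^ 2
        + ((1 - t ^ 2) * deriv (deriv F) t - t * deriv F t) ^ 2 :=
  zonal_hess_norm_sq_general n e he F hF u hu t ht
end
end

section
/- For every valuation ψ : K^n → ℝ that is continuous, translation invariant, and homogeneous of degree 1, ψ is Minkowski additive: ψ(K + L) = ψ(K) + ψ(L) for all convex bodies K, L, where + denotes Minkowski addition. -/
/-!
Call a convex body `A` additive for `ψ` if `ψ (A + B) = ψ A + ψ B` for every `B`. Points are
additive by translation invariance, and additivity is preserved by Minkowski sums, by dilations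
and, by continuity, by Hausdorff limits. As polytopes are dense, it suffices to show that the join
`J = conv (X ∪ Y)` of two additive bodies is additive.

For `0 ≤ x ≤ y ≤ 1` the body `(1 - y) X + x Y + (y - x) J` is the union of the bodies
`(1 - τ) X + τ Y`, `τ ∈ [x, y]`. Two adjacent such slabs have convex union and meet in the additive
body `(1 - y) X + y Y`, so the valuation property, applied before and after adding `B`, shows that
`t ↦ δ (t J) B`, where `δ A B = ψ (A + B) - ψ A - ψ B`, is additive and hence linear on `[0, 1]`.
Homogeneity gives `δ (t J) (t B) = t δ J B`, so `δ J (t B) = δ J B` for `t ∈ (0, 1]`; letting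
`t → 0` yields `δ J B = δ J 0 = 0`.
-/

open scoped RealInnerProductSpace
open MeasureTheory

noncomputable section

open scoped Pointwise
open Set Metric Filter Topology

theorem eq_div_mul_apply_one_of_map_add {f : ℝ → ℝ}
    (hadd : ∀ p q, 0 ≤ p → 0 ≤ q → p + q ≤ 1 → f (p + q) = f p + f q) {j k : ℕ} (hj : 0 < j)
    (hkj : k ≤ j) : f (k / j) = k / j * f 1 := by
  have hj' : (0 : ℝ) < j := by exact_mod_cast hj
  have hmul : ∀ k ≤ j, f (k / j) = k * f (1 / j) := by
    intro k
    induction k with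
    | zero =>
      intro _
      have h0 := hadd 0 0 le_rfl le_rfl (by norm_num)
      simp only [add_zero] at h0
      simp only [Nat.cast_zero, zero_div, zero_mul]
      linarith
    | succ k ih =>
      intro hk
      have hsum := hadd (k / j) (1 / j) (by positivity) (by positivity)
        (by rw [← add_div, div_le_one hj']; exact_mod_cast hk)
      rw [← add_div] at hsum
      push_cast
      rw [hsum, ih (by omega)]
      ring
  have hone := hmul j le_rfl
  rw [div_self hj'.ne'] at hone
  rw [hmul k hkj, hone]
  field_simp

theorem eq_mul_apply_one_of_map_add_of_continuousOn {f : ℝ → ℝ} (hf : ContinuousOn f (Icc 0 1))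
    (hadd : ∀ p q, 0 ≤ p → 0 ≤ q → p + q ≤ 1 → f (p + q) = f p + f q) :
    ∀ t ∈ Icc (0 : ℝ) 1, f t = t * f 1 := by
  intro t ht
  have hseq : Tendsto (fun j : ℕ => (⌊t * j⌋₊ : ℝ) / j) atTop (𝓝 t) :=
    (tendsto_nat_floor_mul_div_atTop ht.1).comp tendsto_natCast_atTop_atTop
  have hfloor (j : ℕ) : ⌊t * j⌋₊ ≤ j :=
    Nat.floor_le_of_le (mul_le_of_le_one_left (Nat.cast_nonneg j) ht.2)
  have hmem (j : ℕ) : (⌊t * j⌋₊ : ℝ) / j ∈ Icc (0 : ℝ) 1 :=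
    ⟨by positivity, div_le_one_of_le₀ (by exact_mod_cast hfloor j) (Nat.cast_nonneg j)⟩
  have hlim : Tendsto (fun j : ℕ => f ((⌊t * j⌋₊ : ℝ) / j)) atTop (𝓝 (f t)) :=
    (hf t ht).tendsto.comp (tendsto_nhdsWithin_iff.2 ⟨hseq, .of_forall hmem⟩)
  refine tendsto_nhds_unique hlim ((hseq.mul_const (f 1)).congr' ?_)
  filter_upwards [eventually_gt_atTop 0] with j hj
  exact (eq_div_mul_apply_one_of_map_add hadd hj (hfloor j)).symm

section ConvexSets

variable {E : Type*} [AddCommGroup E] [Module ℝ E]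

theorem mem_convexJoin_iff_exists_smul_add_smul {s t : Set E} {z : E} :
    z ∈ convexJoin ℝ s t ↔
      ∃ θ ∈ Icc (0 : ℝ) 1, ∃ x ∈ s, ∃ y ∈ t, (1 - θ) • x + θ • y = z := by
  simp only [mem_convexJoin, segment_eq_image, mem_image]
  constructor
  · rintro ⟨x, hx, y, hy, θ, hθ, rfl⟩
    exact ⟨θ, hθ, x, hx, y, hy, rfl⟩
  · rintro ⟨θ, hθ, x, hx, y, hy, rfl⟩
    exact ⟨x, hx, y, hy, θ, hθ, rfl⟩

theorem convexJoin_eq_iUnion_smul_add_smul (s t : Set E) :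
    convexJoin ℝ s t = ⋃ θ ∈ Icc (0 : ℝ) 1, (1 - θ) • s + θ • t := by
  ext z
  simp only [mem_convexJoin_iff_exists_smul_add_smul, mem_iUnion, exists_prop, Set.mem_add]
  constructor
  · rintro ⟨θ, hθ, x, hx, y, hy, rfl⟩
    exact ⟨θ, hθ, _, ⟨x, hx, rfl⟩, _, ⟨y, hy, rfl⟩, rfl⟩
  · rintro ⟨θ, hθ, _, ⟨x, hx, rfl⟩, _, ⟨y, hy, rfl⟩, rfl⟩
    exact ⟨θ, hθ, x, hx, y, hy, rfl⟩

variable [TopologicalSpace E] [IsTopologicalAddGroup E] [ContinuousSMul ℝ E]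

theorem IsCompact.convexJoin {s t : Set E} (hs : IsCompact s) (ht : IsCompact t) :
    IsCompact (_root_.convexJoin ℝ s t) := by
  have : _root_.convexJoin ℝ s t =
      (fun p : ℝ × E × E => (1 - p.1) • p.2.1 + p.1 • p.2.2) '' (Icc 0 1 ×ˢ s ×ˢ t) := by
    ext z
    simp only [mem_convexJoin_iff_exists_smul_add_smul, mem_image, mem_prod, Prod.exists]
    constructor
    · rintro ⟨θ, hθ, x, hx, y, hy, rfl⟩
      exact ⟨θ, x, y, ⟨hθ, hx, hy⟩, rfl⟩
    · rintro ⟨θ, x, y, ⟨hθ, hx, hy⟩, rfl⟩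
      exact ⟨θ, hθ, x, hx, y, hy, rfl⟩
  rw [this]
  exact (isCompact_Icc.prod (hs.prod ht)).image (by fun_prop)

theorem inter_add_eq_of_convex_union {P Q B : Set E} (hP : IsClosed P) (hQ : IsClosed Q)
    (hPQ : Convex ℝ (P ∪ Q)) (hB : Convex ℝ B) :
    P ∩ Q + B = (P + B) ∩ (Q + B) := by
  refine Subset.antisymm inter_add_subset ?_
  rintro _ ⟨⟨p, hp, b₁, hb₁, rfl⟩, ⟨q, hq, b₂, hb₂, hz : q + b₂ = p + b₁⟩⟩
  -- the segment `[p, q]` is connected and covered by the closed sets `P` and `Q`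
  obtain ⟨m, hm, hmP, hmQ⟩ := isPreconnected_closed_iff.1 (convex_segment p q).isPreconnected
    P Q hP hQ (hPQ.segment_subset (.inl hp) (.inr hq)) ⟨p, left_mem_segment ℝ p q, hp⟩
    ⟨q, right_mem_segment ℝ p q, hq⟩
  obtain ⟨a, c, ha, hc, hac, rfl⟩ := hm
  refine ⟨_, ⟨hmP, hmQ⟩, a • b₁ + c • b₂, hB hb₁ hb₂ ha hc hac, ?_⟩
  calc a • p + c • q + (a • b₁ + c • b₂) = a • (p + b₁) + c • (q + b₂) := by module
    _ = p + b₁ := by rw [hz, ← add_smul, hac, one_smul]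

end ConvexSets

namespace ConvexBody

section Slabs

variable {V : Type*} [TopologicalSpace V] [AddCommGroup V] [Module ℝ V]
  [IsTopologicalAddGroup V] [ContinuousSMul ℝ V]

theorem add_smul_of_nonneg (K : ConvexBody V) {a b : ℝ} (ha : 0 ≤ a) (hb : 0 ≤ b) :
    (a + b) • K = a • K + b • K :=
  ConvexBody.ext <| K.convex.add_smul ha hb

theorem smul_add_smul_add_smul_add_smul (K L : ConvexBody V) {a b c d : ℝ} (ha : 0 ≤ a)
    (hb : 0 ≤ b) (hc : 0 ≤ c) (hd : 0 ≤ d) :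
    a • K + b • L + (c • K + d • L) = (a + c) • K + (b + d) • L := by
  rw [add_smul_of_nonneg K ha hc, add_smul_of_nonneg L hb hd, add_add_add_comm]

def join (K L : ConvexBody V) : ConvexBody V where
  carrier := convexJoin ℝ K L
  convex' := K.convex.convexJoin L.convex
  isCompact' := K.isCompact.convexJoin L.isCompact
  nonempty' := K.nonempty.mono (subset_convexJoin_left L.nonempty)

@[simp]
theorem coe_join (K L : ConvexBody V) : (join K L : Set V) = convexJoin ℝ K L := rfl

def mix (K L : ConvexBody V) (θ : ℝ) : ConvexBody V := (1 - θ) • K + θ • L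

theorem coe_join_eq_iUnion_mix (K L : ConvexBody V) :
    (join K L : Set V) = ⋃ θ ∈ Icc (0 : ℝ) 1, (mix K L θ : Set V) :=
  convexJoin_eq_iUnion_smul_add_smul (K : Set V) L

theorem smul_mix_add_smul_mix (K L : ConvexBody V) {a b θ₁ θ₂ : ℝ} (ha : 0 ≤ a) (hb : 0 ≤ b)
    (hab : a + b = 1) (hθ₁ : θ₁ ∈ Icc (0 : ℝ) 1) (hθ₂ : θ₂ ∈ Icc (0 : ℝ) 1) :
    a • mix K L θ₁ + b • mix K L θ₂ = mix K L (a * θ₁ + b * θ₂) := by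
  simp only [mix, smul_add, smul_smul]
  rw [smul_add_smul_add_smul_add_smul K L (mul_nonneg ha (by linarith [hθ₁.2]))
    (mul_nonneg ha hθ₁.1) (mul_nonneg hb (by linarith [hθ₂.2])) (mul_nonneg hb hθ₂.1)]
  congr 2
  linear_combination hab

def slab (K L : ConvexBody V) (x y : ℝ) : ConvexBody V :=
  (1 - y) • K + x • L + (y - x) • join K L

theorem coe_slab (K L : ConvexBody V) {x y : ℝ} (hx : 0 ≤ x) (hxy : x ≤ y) (hy : y ≤ 1) :
    (slab K L x y : Set V) = ⋃ τ ∈ Icc x y, (mix K L τ : Set V) := by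
  have hmix : ∀ θ ∈ Icc (0 : ℝ) 1,
      (1 - y) • K + x • L + (y - x) • mix K L θ = mix K L ((1 - θ) * x + θ * y) := by
    intro θ hθ
    simp only [mix, smul_add, smul_smul]
    rw [smul_add_smul_add_smul_add_smul K L (by linarith) hx
      (mul_nonneg (by linarith) (by linarith [hθ.2])) (mul_nonneg (by linarith) hθ.1)]
    congr 2 <;> ring
  rw [← segment_eq_Icc hxy, segment_eq_image, biUnion_image, slab, coe_add, coe_smul,
    coe_join_eq_iUnion_mix, smul_set_iUnion₂, add_iUnion₂]
  refine iUnion₂_congr fun θ hθ => ?_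
  simp only [smul_eq_mul]
  rw [← hmix θ hθ]
  rfl

theorem coe_slab_union_coe_slab (K L : ConvexBody V) {x y z : ℝ} (hx : 0 ≤ x) (hxy : x ≤ y)
    (hyz : y ≤ z) (hz : z ≤ 1) :
    (slab K L x y : Set V) ∪ slab K L y z = slab K L x z := by
  rw [coe_slab K L hx hxy (hyz.trans hz), coe_slab K L (hx.trans hxy) hyz hz,
    coe_slab K L hx (hxy.trans hyz) hz, ← biUnion_union, Icc_union_Icc_eq_Icc hxy hyz]

theorem coe_slab_inter_coe_slab (K L : ConvexBody V) {x y z : ℝ} (hx : 0 ≤ x) (hxy : x ≤ y)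
    (hyz : y ≤ z) (hz : z ≤ 1) :
    (slab K L x y : Set V) ∩ slab K L y z = mix K L y := by
  rw [coe_slab K L hx hxy (hyz.trans hz), coe_slab K L (hx.trans hxy) hyz hz]
  refine Subset.antisymm ?_ fun w hw =>
    ⟨mem_biUnion ⟨hxy, le_rfl⟩ hw, mem_biUnion ⟨le_rfl, hyz⟩ hw⟩
  simp only [subset_def, mem_inter_iff, mem_iUnion, exists_prop, and_imp, forall_exists_index]
  intro w τ₁ hτ₁ hw₁ τ₂ hτ₂ hw₂
  obtain rfl | hτ₁y := hτ₁.2.eq_or_lt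
  · exact hw₁
  -- `w = (1 - μ) • w + μ • w` with `(1 - μ) * τ₁ + μ * τ₂ = y`
  set μ := (y - τ₁) / (τ₂ - τ₁)
  have hτ : 0 < τ₂ - τ₁ := by linarith [hτ₂.1]
  have hμ : μ ≤ 1 := (div_le_one hτ).2 (by linarith [hτ₂.1])
  have hμy : (1 - μ) * τ₁ + μ * τ₂ = y := by
    simp only [μ]
    field_simp
    ring
  have hmem := Set.add_mem_add (smul_mem_smul_set (a := 1 - μ) hw₁)
    (smul_mem_smul_set (a := μ) hw₂)
  rwa [← coe_smul, ← coe_smul, ← coe_add, smul_mix_add_smul_mix K L (by linarith)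
    (div_nonneg (by linarith) hτ.le) (by ring) ⟨hx.trans hτ₁.1, by linarith⟩
    ⟨by linarith [hτ₂.1], hτ₂.2.trans hz⟩, hμy, ← add_smul, sub_add_cancel, one_smul] at hmem

end Slabs

section Metric

variable {V : Type*} [NormedAddCommGroup V] [NormedSpace ℝ V]

protected theorem zero_smul (K : ConvexBody V) : (0 : ℝ) • K = 0 :=
  ConvexBody.ext <| Set.zero_smul_set K.nonempty

theorem exists_mem_dist_le_dist {K : ConvexBody V} {x : V} (hx : x ∈ K) (L : ConvexBody V) :
    ∃ y ∈ L, dist x y ≤ dist K L := by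
  obtain ⟨y, hy, hxy⟩ := L.isCompact.exists_infDist_eq_dist L.nonempty x
  refine ⟨y, hy, hxy ▸ ?_⟩
  rw [← hausdorffDist_coe]
  exact infDist_le_hausdorffDist_of_mem hx hausdorffEDist_ne_top

theorem dist_add_right_le (K L B : ConvexBody V) : dist (K + B) (L + B) ≤ dist K L := by
  have key : ∀ K L : ConvexBody V, ∀ z ∈ (K + B : Set V), ∃ w ∈ (L + B : Set V),
      dist z w ≤ dist K L := by
    rintro K L _ ⟨x, hx, b, hb, rfl⟩
    obtain ⟨y, hy, hxy⟩ := exists_mem_dist_le_dist hx L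
    exact ⟨y + b, Set.add_mem_add hy hb, by rwa [dist_add_right]⟩
  rw [← hausdorffDist_coe]
  refine hausdorffDist_le_of_mem_dist dist_nonneg (key K L) fun z hz => ?_
  obtain ⟨w, hw, hzw⟩ := key L K z hz
  exact ⟨w, hw, by rwa [dist_comm K]⟩

theorem continuous_add_right (B : ConvexBody V) : Continuous fun K : ConvexBody V => K + B :=
  LipschitzWith.continuous (K := 1) <| .of_dist_le_mul fun K L => by
    simpa only [NNReal.coe_one, one_mul] using dist_add_right_le K L B

theorem dist_smul_smul_le (K : ConvexBody V) {C : ℝ} (hC : 0 ≤ C) (hK : ∀ x ∈ K, ‖x‖ ≤ C)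
    (s t : ℝ) : dist (s • K) (t • K) ≤ C * dist s t := by
  have key : ∀ s t : ℝ, ∀ z ∈ (s • K : Set V), ∃ w ∈ (t • K : Set V), dist z w ≤ C * dist s t := by
    rintro s t _ ⟨x, hx, rfl⟩
    refine ⟨t • x, smul_mem_smul_set hx, ?_⟩
    rw [dist_eq_norm, ← sub_smul, norm_smul, mul_comm, ← dist_eq_norm]
    exact mul_le_mul_of_nonneg_right (hK x hx) dist_nonneg
  rw [← hausdorffDist_coe]
  refine hausdorffDist_le_of_mem_dist (by positivity) (key s t) fun z hz => ?_
  obtain ⟨w, hw, hzw⟩ := key t s z hz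
  exact ⟨w, hw, by rwa [dist_comm s]⟩

theorem continuous_smul_left (K : ConvexBody V) : Continuous fun t : ℝ => t • K := by
  obtain ⟨C, hC, hK⟩ := K.isBounded.exists_pos_norm_le
  exact LipschitzWith.continuous (K := C.toNNReal) <| .of_dist_le_mul fun s t => by
    simpa only [Real.coe_toNNReal C hC.le] using dist_smul_smul_le K hC.le hK s t

def polytope (s : Finset V) (hs : s.Nonempty) : ConvexBody V where
  carrier := convexHull ℝ s
  convex' := convex_convexHull ℝ _
  isCompact' := s.finite_toSet.isCompact_convexHull ℝ
  nonempty' := (Finset.coe_nonempty.2 hs).convexHull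

@[simp]
theorem coe_polytope (s : Finset V) (hs : s.Nonempty) :
    (polytope s hs : Set V) = convexHull ℝ s := rfl

theorem polytope_cons {a : V} {s : Finset V} (ha : a ∉ s) (hs : s.Nonempty) :
    polytope (s.cons a ha) (s.cons_nonempty ha) =
      join (polytope {a} (Finset.singleton_nonempty a)) (polytope s hs) :=
  ConvexBody.ext <| by
    simp only [coe_polytope, coe_join, Finset.coe_cons, Finset.coe_singleton,
      convexHull_singleton, convexHull_insert (Finset.coe_nonempty.2 hs)]

theorem exists_polytope_dist_lt (K : ConvexBody V) {ε : ℝ} (hε : 0 < ε) :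
    ∃ (s : Finset V) (hs : s.Nonempty), dist (polytope s hs) K < ε := by
  obtain ⟨t, htK, ht, hcover⟩ := finite_cover_balls_of_compact K.isCompact (half_pos hε)
  obtain ⟨x, hx⟩ := K.nonempty
  have hs : ht.toFinset.Nonempty := by
    obtain ⟨y, hy, -⟩ := mem_iUnion₂.1 (hcover hx)
    exact ⟨y, ht.mem_toFinset.2 hy⟩
  refine ⟨ht.toFinset, hs, ?_⟩
  rw [← hausdorffDist_coe]
  refine (hausdorffDist_le_of_mem_dist (half_pos hε).le (fun p hp => ?_) fun a ha => ?_).trans_lt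
    (half_lt_self hε)
  · refine ⟨p, convexHull_min ?_ K.convex hp, (dist_self p).le.trans (half_pos hε).le⟩
    simpa using htK
  · obtain ⟨y, hy, hay⟩ := mem_iUnion₂.1 (hcover ha)
    exact ⟨y, subset_convexHull ℝ _ (by simpa using hy), (mem_ball.1 hay).le⟩

end Metric

section Valuation

variable {V : Type*} [NormedAddCommGroup V] [NormedSpace ℝ V]

def IsValuation (ψ : ConvexBody V → ℝ) : Prop :=
  ∀ K L M N : ConvexBody V, Convex ℝ ((K : Set V) ∪ L) → (M : Set V) = (K : Set V) ∪ L →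
    (N : Set V) = (K : Set V) ∩ L → ψ K + ψ L = ψ M + ψ N

def IsTranslationInvariant (ψ : ConvexBody V → ℝ) : Prop :=
  ∀ (x : V) (K K' : ConvexBody V), (K' : Set V) = (fun y => x + y) '' (K : Set V) → ψ K' = ψ K

def IsHomogeneousOfDegreeOne (ψ : ConvexBody V → ℝ) : Prop :=
  ∀ (c : ℝ), 0 < c → ∀ K : ConvexBody V, ψ (c • K) = c * ψ K

def IsAdditiveAt (ψ : ConvexBody V → ℝ) (A : ConvexBody V) : Prop :=
  ∀ B, ψ (A + B) = ψ A + ψ B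

def additivityDefect (ψ : ConvexBody V → ℝ) (A B : ConvexBody V) : ℝ :=
  ψ (A + B) - ψ A - ψ B

variable {ψ : ConvexBody V → ℝ}

theorem isAdditiveAt_iff_additivityDefect_eq_zero {A : ConvexBody V} :
    IsAdditiveAt ψ A ↔ ∀ B, additivityDefect ψ A B = 0 := by
  simp only [IsAdditiveAt, additivityDefect, sub_sub, sub_eq_zero]

theorem IsAdditiveAt.add {A A' : ConvexBody V} (hA : IsAdditiveAt ψ A)
    (hA' : IsAdditiveAt ψ A') : IsAdditiveAt ψ (A + A') := fun B => by
  rw [add_assoc, hA, hA', hA, add_assoc]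

theorem IsAdditiveAt.additivityDefect_add_left {G : ConvexBody V} (hG : IsAdditiveAt ψ G)
    (A B : ConvexBody V) : additivityDefect ψ (G + A) B = additivityDefect ψ A B := by
  simp only [additivityDefect]
  rw [add_assoc, hG, hG]
  ring

theorem isClosed_setOf_isAdditiveAt (hcont : Continuous ψ) :
    IsClosed {A | IsAdditiveAt ψ A} := by
  simp only [IsAdditiveAt, ofPred_forall]
  exact isClosed_iInter fun B =>
    isClosed_eq (hcont.comp (continuous_add_right B)) (hcont.add continuous_const)

theorem continuous_additivityDefect_left (hcont : Continuous ψ) (B : ConvexBody V) :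
    Continuous fun A => additivityDefect ψ A B :=
  ((hcont.comp (continuous_add_right B)).sub hcont).sub continuous_const

theorem continuous_additivityDefect_right (hcont : Continuous ψ) (A : ConvexBody V) :
    Continuous fun B => additivityDefect ψ A B := by
  simp only [additivityDefect, add_comm A]
  exact ((hcont.comp (continuous_add_right A)).sub continuous_const).sub hcont

theorem IsHomogeneousOfDegreeOne.apply_zero (hψ : IsHomogeneousOfDegreeOne ψ) : ψ 0 = 0 := by
  have h := hψ 2 two_pos 0
  rw [smul_zero] at h
  linarith

theorem IsHomogeneousOfDegreeOne.additivityDefect_zero_right (hψ : IsHomogeneousOfDegreeOne ψ)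
    (A : ConvexBody V) : additivityDefect ψ A 0 = 0 := by
  simp only [additivityDefect, add_zero, hψ.apply_zero, sub_self]

theorem IsHomogeneousOfDegreeOne.additivityDefect_smul (hψ : IsHomogeneousOfDegreeOne ψ) {c : ℝ}
    (hc : 0 < c) (A B : ConvexBody V) :
    additivityDefect ψ (c • A) (c • B) = c * additivityDefect ψ A B := by
  simp only [additivityDefect, ← smul_add, hψ c hc]
  ring

theorem IsHomogeneousOfDegreeOne.isAdditiveAt_smul (hψ : IsHomogeneousOfDegreeOne ψ)
    {A : ConvexBody V} (hA : IsAdditiveAt ψ A) {c : ℝ} (hc : 0 ≤ c) :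
    IsAdditiveAt ψ (c • A) := by
  intro B
  obtain rfl | hc := hc.eq_or_lt
  · rw [ConvexBody.zero_smul, zero_add, hψ.apply_zero, zero_add]
  have hB : c • A + B = c • (A + c⁻¹ • B) := by
    rw [smul_add, smul_smul, mul_inv_cancel₀ hc.ne', one_smul]
  rw [hB, hψ c hc, hA, hψ c hc, hψ c⁻¹ (inv_pos.2 hc), mul_add, mul_inv_cancel_left₀ hc.ne']

theorem isAdditiveAt_polytope_singleton (htrans : IsTranslationInvariant ψ)
    (hhom : IsHomogeneousOfDegreeOne ψ) (a : V) :
    IsAdditiveAt ψ (polytope {a} (Finset.singleton_nonempty a)) := by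
  intro B
  have ha : ψ (polytope {a} (Finset.singleton_nonempty a)) = 0 :=
    (htrans a 0 _ (by simp)).trans hhom.apply_zero
  rw [ha, zero_add]
  exact htrans a B _ (by simp [singleton_add])

theorem IsValuation.additivityDefect_add_additivityDefect (hval : IsValuation ψ)
    {P Q M N : ConvexBody V} (hPQ : Convex ℝ ((P : Set V) ∪ Q)) (hM : (M : Set V) = (P : Set V) ∪ Q)
    (hN : (N : Set V) = (P : Set V) ∩ Q) (B : ConvexBody V) :
    additivityDefect ψ P B + additivityDefect ψ Q B =
      additivityDefect ψ M B + additivityDefect ψ N B := by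
  have hMB : ((M + B : ConvexBody V) : Set V) =
      ((P + B : ConvexBody V) : Set V) ∪ ((Q + B : ConvexBody V) : Set V) := by
    rw [coe_add, coe_add, coe_add, hM, union_add]
  have hNB : ((N + B : ConvexBody V) : Set V) =
      ((P + B : ConvexBody V) : Set V) ∩ ((Q + B : ConvexBody V) : Set V) := by
    rw [coe_add, coe_add, coe_add, hN,
      inter_add_eq_of_convex_union P.isClosed Q.isClosed hPQ B.convex]
  have h := hval P Q M N hPQ hM hN
  have hB := hval (P + B) (Q + B) (M + B) (N + B) (hMB ▸ (M + B).convex) hMB hNB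
  simp only [additivityDefect]
  linarith

theorem additivityDefect_smul_join_add (hval : IsValuation ψ) (hhom : IsHomogeneousOfDegreeOne ψ)
    {X Y : ConvexBody V} (hX : IsAdditiveAt ψ X) (hY : IsAdditiveAt ψ Y) (B : ConvexBody V)
    {x y z : ℝ} (hx : 0 ≤ x) (hxy : x ≤ y) (hyz : y ≤ z) (hz : z ≤ 1) :
    additivityDefect ψ ((y - x) • join X Y) B + additivityDefect ψ ((z - y) • join X Y) B =
      additivityDefect ψ ((z - x) • join X Y) B := by
  have hslab {x y : ℝ} (hx : 0 ≤ x) (hy : y ≤ 1) :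
      additivityDefect ψ (slab X Y x y) B = additivityDefect ψ ((y - x) • join X Y) B :=
    ((hhom.isAdditiveAt_smul hX (by linarith)).add
      (hhom.isAdditiveAt_smul hY hx)).additivityDefect_add_left _ B
  have hmix : additivityDefect ψ (mix X Y y) B = 0 :=
    isAdditiveAt_iff_additivityDefect_eq_zero.1 ((hhom.isAdditiveAt_smul hX (by linarith)).add
      (hhom.isAdditiveAt_smul hY (hx.trans hxy))) B
  have hunion := coe_slab_union_coe_slab X Y hx hxy hyz hz
  have h := hval.additivityDefect_add_additivityDefect (hunion ▸ (slab X Y x z).convex)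
    hunion.symm (coe_slab_inter_coe_slab X Y hx hxy hyz hz).symm B
  rwa [hslab hx (hyz.trans hz), hslab (hx.trans hxy) hz, hslab hx hz, hmix, add_zero] at h

theorem isAdditiveAt_join (hval : IsValuation ψ) (hcont : Continuous ψ)
    (hhom : IsHomogeneousOfDegreeOne ψ) {X Y : ConvexBody V} (hX : IsAdditiveAt ψ X)
    (hY : IsAdditiveAt ψ Y) : IsAdditiveAt ψ (join X Y) := by
  set J := join X Y
  have hlin (B : ConvexBody V) :
      ∀ t ∈ Icc (0 : ℝ) 1, additivityDefect ψ (t • J) B = t * additivityDefect ψ J B := by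
    have hcontJ : Continuous fun t : ℝ => additivityDefect ψ (t • J) B :=
      (continuous_additivityDefect_left hcont B).comp (continuous_smul_left J)
    simpa only [one_smul] using eq_mul_apply_one_of_map_add_of_continuousOn hcontJ.continuousOn
      fun p q hp hq hpq => by
        simpa only [sub_zero, add_sub_cancel_left] using
          (additivityDefect_smul_join_add hval hhom hX hY B le_rfl hp (by linarith) hpq).symm
  have hconst (B : ConvexBody V) :
      ∀ t ∈ Ioc (0 : ℝ) 1, additivityDefect ψ J (t • B) = additivityDefect ψ J B := by
    intro t ht
    have h := hhom.additivityDefect_smul ht.1 J B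
    rw [hlin (t • B) t (Ioc_subset_Icc_self ht)] at h
    exact mul_left_cancel₀ ht.1.ne' h
  refine isAdditiveAt_iff_additivityDefect_eq_zero.2 fun B => ?_
  have hcontB : Continuous fun t : ℝ => additivityDefect ψ J (t • B) :=
    (continuous_additivityDefect_right hcont J).comp (continuous_smul_left B)
  have hlim : Tendsto (fun t : ℝ => additivityDefect ψ J (t • B)) (𝓝[>] 0)
      (𝓝 (additivityDefect ψ J ((0 : ℝ) • B))) :=
    hcontB.continuousAt.tendsto.mono_left nhdsWithin_le_nhds
  rw [ConvexBody.zero_smul, hhom.additivityDefect_zero_right] at hlim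
  refine tendsto_nhds_unique (tendsto_const_nhds.congr' ?_) hlim
  filter_upwards [Ioc_mem_nhdsGT zero_lt_one] with t ht
  exact (hconst B t ht).symm

theorem IsValuation.map_add (hval : IsValuation ψ) (hcont : Continuous ψ)
    (htrans : IsTranslationInvariant ψ) (hhom : IsHomogeneousOfDegreeOne ψ)
    (K L : ConvexBody V) : ψ (K + L) = ψ K + ψ L := by
  have hpolytope (s : Finset V) (hs : s.Nonempty) : IsAdditiveAt ψ (polytope s hs) := by
    induction hs using Finset.Nonempty.cons_induction with
    | singleton a => exact isAdditiveAt_polytope_singleton htrans hhom a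
    | cons a s ha hs ih =>
      rw [polytope_cons ha hs]
      exact isAdditiveAt_join hval hcont hhom (isAdditiveAt_polytope_singleton htrans hhom a) ih
  refine (isClosed_setOf_isAdditiveAt hcont).closure_subset
    (Metric.mem_closure_iff.2 fun ε hε => ?_) L
  obtain ⟨s, hs, hsK⟩ := exists_polytope_dist_lt K hε
  exact ⟨_, hpolytope s hs, by rwa [dist_comm]⟩

end Valuation

end ConvexBody

/-- Spiegel: every continuous, translation invariant valuation
`ψ : K^n → ℝ` that is homogeneous of degree 1 is Minkowski additive. -/
theorem minkowski_additivity_of_degree_one (n : ℕ)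
    (ψ : ConvexBody (Eucl n) → ℝ)
    (hval : ∀ K L M N : ConvexBody (Eucl n),
      Convex ℝ ((K : Set (Eucl n)) ∪ L) →
      (M : Set (Eucl n)) = (K : Set (Eucl n)) ∪ L →
      (N : Set (Eucl n)) = (K : Set (Eucl n)) ∩ L →
      ψ K + ψ L = ψ M + ψ N)
    (hcont : Continuous ψ)
    (htrans : ∀ (x : Eucl n) (K K' : ConvexBody (Eucl n)),
      (K' : Set (Eucl n)) = (fun y => x + y) '' (K : Set (Eucl n)) → ψ K' = ψ K)
    (hhom : ∀ (c : ℝ), 0 < c → ∀ K : ConvexBody (Eucl n), ψ (c • K) = c * ψ K) :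
    ∀ K L : ConvexBody (Eucl n), ψ (K + L) = ψ K + ψ L :=
  ConvexBody.IsValuation.map_add hval hcont htrans hhom
end
end
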